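/- Let λ = (3 − √5)/2, so that λ ∈ (0,1) and λ + 1/λ = 3. Let n ≥ 1 and let x₀, x₁, …, x_n be nonnegative real numbers satisfying x_j ≤ (1/3)(x_{j−1} + x_{j+1}) for all 1 ≤ j ≤ n−1. Then for every 0 ≤ j ≤ n, x_j ≤ (x₀ + x_n) · (λ^j + λ^{n−j}). -/

import Mathlib

/-!
The comparison sequence `y j = λ ^ j + λ ^ (n - j)` solves the recurrence
`y j = (1/3) (y (j - 1) + y (j + 1))` because `λ² + 1 = 3λ`, and scaled by `x 0 + x n` it
dominates `x` at both ends. The difference of a supersolution and a subsolution of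
`u j = c (u (j - 1) + u (j + 1))` with `c < 1/2` cannot have a negative interior minimum,
since at such a minimum `u j ≥ c (u (j - 1) + u (j + 1)) ≥ 2c u j`.
-/

theorem nonneg_of_le_mul_add_of_nonneg {c : ℝ} (hc₀ : 0 ≤ c) (hc : 2 * c < 1) {n : ℕ}
    {u : ℕ → ℝ} (h₀ : 0 ≤ u 0) (hn : 0 ≤ u n)
    (hu : ∀ j, 1 ≤ j → j + 1 ≤ n → c * (u (j - 1) + u (j + 1)) ≤ u j) :
    ∀ j ≤ n, 0 ≤ u j := by
  obtain ⟨m, hm, hmin⟩ := Finset.exists_min_image (Finset.range (n + 1)) u ⟨0, by simp⟩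
  have hmin' : ∀ j ≤ n, u m ≤ u j := fun j hj => hmin j (Finset.mem_range.mpr (by omega))
  have hmn : m ≤ n := Nat.lt_succ_iff.mp (Finset.mem_range.mp hm)
  suffices 0 ≤ u m from fun j hj => this.trans (hmin' j hj)
  rcases Nat.eq_zero_or_pos m with rfl | hm₀
  · exact h₀
  rcases hmn.eq_or_lt with rfl | hmn
  · exact hn
  have hlow : 2 * c * u m ≤ c * (u (m - 1) + u (m + 1)) := by
    have := add_le_add (hmin' (m - 1) (by omega)) (hmin' (m + 1) hmn)
    nlinarith
  nlinarith [hu m hm₀ hmn]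

theorem le_of_le_mul_add_of_mul_add_le {c : ℝ} (hc₀ : 0 ≤ c) (hc : 2 * c < 1) {n : ℕ}
    {x y : ℕ → ℝ} (h₀ : x 0 ≤ y 0) (hn : x n ≤ y n)
    (hx : ∀ j, 1 ≤ j → j + 1 ≤ n → x j ≤ c * (x (j - 1) + x (j + 1)))
    (hy : ∀ j, 1 ≤ j → j + 1 ≤ n → c * (y (j - 1) + y (j + 1)) ≤ y j) :
    ∀ j ≤ n, x j ≤ y j := by
  have key := nonneg_of_le_mul_add_of_nonneg (u := y - x) hc₀ hc
    (sub_nonneg.mpr h₀) (sub_nonneg.mpr hn) fun j hj₁ hjn => by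
      simp only [Pi.sub_apply]
      linarith [hx j hj₁ hjn, hy j hj₁ hjn]
  exact fun j hj => sub_nonneg.mp (key j hj)

theorem pow_add_pow_tsub_recurrence {l s : ℝ} (hl : l ^ 2 + 1 = s * l) {n j : ℕ}
    (hj₁ : 1 ≤ j) (hjn : j + 1 ≤ n) :
    (l ^ (j - 1) + l ^ (n - (j - 1))) + (l ^ (j + 1) + l ^ (n - (j + 1))) =
      s * (l ^ j + l ^ (n - j)) := by
  obtain ⟨a, rfl⟩ : ∃ a, j = a + 1 := ⟨j - 1, by omega⟩
  obtain ⟨b, rfl⟩ : ∃ b, n = a + b + 2 := ⟨n - a - 2, by omega⟩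
  rw [show a + 1 - 1 = a by omega, show a + b + 2 - a = b + 2 by omega,
    show a + b + 2 - (a + 1) = b + 1 by omega, show a + b + 2 - (a + 1 + 1) = b by omega]
  linear_combination (l ^ a + l ^ b) * hl

theorem pos_lt_one_sq_add_one_of_eq_three_sub_sqrt_five_div_two {l : ℝ}
    (hl : l = (3 - √5) / 2) : 0 < l ∧ l < 1 ∧ l ^ 2 + 1 = 3 * l := by
  have h5 : √5 ^ 2 = 5 := Real.sq_sqrt (by norm_num)
  have h2 : 2 < √5 := Real.lt_sqrt (by norm_num) |>.mpr (by norm_num)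
  subst hl
  refine ⟨?_, ?_, ?_⟩ <;> nlinarith

/-- Discrete three-term comparison lemma with `λ = (3 − √5)/2`. -/
theorem stmt9 (l : ℝ) (hl : l = (3 - Real.sqrt 5) / 2) :
    (0 < l ∧ l < 1 ∧ l + 1 / l = 3) ∧
    ∀ (n : ℕ), 1 ≤ n → ∀ x : ℕ → ℝ,
      (∀ j ≤ n, 0 ≤ x j) →
      (∀ j, 1 ≤ j → j + 1 ≤ n → x j ≤ (1 / 3) * (x (j - 1) + x (j + 1))) →
      ∀ j ≤ n, x j ≤ (x 0 + x n) * (l ^ j + l ^ (n - j)) := by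
  obtain ⟨hl₀, hl₁, hlq⟩ := pos_lt_one_sq_add_one_of_eq_three_sub_sqrt_five_div_two hl
  refine ⟨⟨hl₀, hl₁, by field_simp; linarith⟩, fun n _ x hx hsub => ?_⟩
  have hx₀ := hx 0 n.zero_le
  have hxn := hx n le_rfl
  have hln := pow_nonneg hl₀.le n
  refine le_of_le_mul_add_of_mul_add_le (by norm_num) (by norm_num) ?_ ?_ hsub
    fun j hj₁ hjn => ?_
  · simp only [pow_zero, Nat.sub_zero]; nlinarith
  · simp only [pow_zero, Nat.sub_self]; nlinarith
  · rw [← mul_add, pow_add_pow_tsub_recurrence hlq hj₁ hjn]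
    exact le_of_eq (by ring)
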